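/- arXiv:math/0305421 — 8 statements merged into one kernel-verified Lean document; each statement's English description precedes it below -/
import Mathlib

section
/- Let a and b be relatively prime positive integers. Then ∑_{m=0}^{a−1} ⌊m·b/a⌋² = (b² + 1)(a − 1)(2a − 1)/(6a) − 2b·s(b,a) − b(a − 1)/2. -/
/-!
Write `m * b = a * q m + r m` with `r m < a`. As `b` is invertible modulo `a`, `m ↦ r m`
permutes `{0, …, a - 1}`, so `∑ r m ^ 2 = ∑ m ^ 2` and `∑ r m = ∑ m`. Squaring
`a * q m = m * b - r m` thus reduces `∑ q m ^ 2` to the mixed sum `∑ m * r m`, and for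
`0 < m < a` the product `((m * b / a)) * ((m / a))` is `(r m / a - 1/2) * (m / a - 1/2)`,
which ties that mixed sum to `s(b, a)`.
-/

/-- The sawtooth function `((x))`. -/
noncomputable def sawtooth (x : ℝ) : ℝ := if Int.fract x = 0 then 0 else Int.fract x - 1/2

/-- The classical Dedekind sum `s(a,b)`. -/
noncomputable def dedekindSum (a b : ℕ) : ℝ :=
  ∑ k ∈ Finset.range b, sawtooth ((k : ℝ) * a / b) * sawtooth ((k : ℝ) / b)

open Finset

theorem injOn_mul_mod_range {a b : ℕ} (hab : a.Coprime b) :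
    Set.InjOn (· * b % a) (range a) := fun m hm n hn h => by
  have hmn : m ≡ n [MOD a] := Nat.ModEq.cancel_right_of_coprime hab h
  rwa [Nat.ModEq, Nat.mod_eq_of_lt (mem_range.1 hm), Nat.mod_eq_of_lt (mem_range.1 hn)] at hmn

theorem image_mul_mod_range {a b : ℕ} (hab : a.Coprime b) :
    (range a).image (· * b % a) = range a := by
  refine eq_of_subset_of_card_le (fun r hr => ?_)
    (card_image_of_injOn (injOn_mul_mod_range hab)).ge
  obtain ⟨m, hm, rfl⟩ := mem_image.1 hr
  exact mem_range.2 (Nat.mod_lt _ (pos_of_ne_zero (by rintro rfl; simp at hm)))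

theorem sum_range_comp_mul_mod {M : Type*} [AddCommMonoid M] {a b : ℕ} (hab : a.Coprime b)
    (f : ℕ → M) : ∑ m ∈ range a, f (m * b % a) = ∑ m ∈ range a, f m := by
  conv_rhs => rw [← image_mul_mod_range hab, sum_image (injOn_mul_mod_range hab)]

theorem sum_range_natCast_real (n : ℕ) : ∑ m ∈ range n, (m : ℝ) = n * ((n : ℝ) - 1) / 2 := by
  induction n with
  | zero => simp
  | succ n ih => rw [sum_range_succ, ih]; push_cast; ring

theorem sum_range_natCast_sq_real (n : ℕ) :
    ∑ m ∈ range n, (m : ℝ) ^ 2 = n * ((n : ℝ) - 1) * (2 * n - 1) / 6 := by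
  induction n with
  | zero => simp
  | succ n ih => rw [sum_range_succ, ih]; push_cast; ring

theorem sawtooth_natCast_div {a : ℕ} (ha : 0 < a) (n : ℕ) :
    sawtooth ((n : ℝ) / a) = if n % a = 0 then 0 else ((n % a : ℕ) : ℝ) / a - 1 / 2 := by
  rw [sawtooth, Int.fract_div_natCast_eq_div_natCast_mod]
  simp [ha.ne']

theorem sawtooth_natCast_div_of_lt {n a : ℕ} (hn : 0 < n) (hna : n < a) :
    sawtooth ((n : ℝ) / a) = n / a - 1 / 2 := by
  rw [sawtooth_natCast_div (hn.trans hna), Nat.mod_eq_of_lt hna, if_neg hn.ne']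

theorem sawtooth_mul_div_of_coprime {a b k : ℕ} (hab : a.Coprime b) (hk : 0 < k) (hka : k < a) :
    sawtooth ((k : ℝ) * b / a) = ((k * b % a : ℕ) : ℝ) / a - 1 / 2 := by
  have hndvd : ¬a ∣ k * b := fun h => Nat.not_dvd_of_pos_of_lt hk hka (hab.dvd_mul_right.1 h)
  rw [← Nat.cast_mul, sawtooth_natCast_div (hk.trans hka), if_neg (mt Nat.dvd_of_mod_eq_zero hndvd)]

theorem dedekindSum_add_one_div_four {a b : ℕ} (ha : 0 < a) (hab : a.Coprime b) :
    dedekindSum b a + 1 / 4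
      = ∑ m ∈ range a, (((m * b % a : ℕ) : ℝ) / a - 1 / 2) * ((m : ℝ) / a - 1 / 2) := by
  obtain ⟨c, rfl⟩ := Nat.exists_eq_add_one_of_ne_zero ha.ne'
  rw [dedekindSum, sum_range_succ', sum_range_succ']
  have hlt : ∀ k ∈ range c, k + 1 < c + 1 := fun k hk => by simpa using mem_range.1 hk
  rw [sum_congr rfl fun k hk => by
    rw [sawtooth_mul_div_of_coprime hab k.succ_pos (hlt k hk),
      sawtooth_natCast_div_of_lt k.succ_pos (hlt k hk)]]
  norm_num [sawtooth]

theorem sum_mul_mul_mod_eq {a b : ℕ} (ha : 0 < a) (hab : a.Coprime b) :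
    ∑ m ∈ range a, (m : ℝ) * (m * b % a : ℕ)
      = a ^ 2 * (dedekindSum b a + 1 / 4) + a ^ 2 * (a - 1) / 2 - a ^ 3 / 4 := by
  have ha' : (a : ℝ) ≠ 0 := by positivity
  rw [dedekindSum_add_one_div_four ha hab, mul_sum]
  calc ∑ m ∈ range a, (m : ℝ) * (m * b % a : ℕ)
      = ∑ m ∈ range a, ((a : ℝ) ^ 2 * ((((m * b % a : ℕ) : ℝ) / a - 1 / 2) * ((m : ℝ) / a - 1 / 2))
          + a / 2 * m + a / 2 * (m * b % a : ℕ) - a ^ 2 / 4) := by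
        refine sum_congr rfl fun m _ => ?_
        field_simp
        ring
    _ = _ := by
        simp only [sum_add_distrib, sum_sub_distrib, ← mul_sum, sum_const, card_range,
          nsmul_eq_mul, sum_range_comp_mul_mod hab (fun n => (n : ℝ)), sum_range_natCast_real]
        ring

theorem natCast_div_mul (n a : ℕ) : ((n / a : ℕ) : ℝ) * a = n - (n % a : ℕ) := by
  rw [eq_sub_iff_add_eq, mul_comm]
  exact_mod_cast Nat.div_add_mod n a

theorem sum_sq_div_mul_sq {a b : ℕ} (hab : a.Coprime b) :
    (∑ m ∈ range a, ((m * b / a : ℕ) : ℝ) ^ 2) * a ^ 2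
      = (b ^ 2 + 1) * (a * (a - 1) * (2 * a - 1) / 6)
        - 2 * b * ∑ m ∈ range a, (m : ℝ) * (m * b % a : ℕ) := by
  calc (∑ m ∈ range a, ((m * b / a : ℕ) : ℝ) ^ 2) * a ^ 2
      = ∑ m ∈ range a, ((b : ℝ) ^ 2 * m ^ 2 - 2 * b * (m * (m * b % a : ℕ))
          + ((m * b % a : ℕ) : ℝ) ^ 2) := by
        rw [sum_mul]
        refine sum_congr rfl fun m _ => ?_
        rw [← mul_pow, natCast_div_mul]
        push_cast
        ring
    _ = _ := by
        rw [sum_add_distrib, sum_sub_distrib, ← mul_sum, ← mul_sum,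
          sum_range_comp_mul_mod hab (fun n => (n : ℝ) ^ 2), sum_range_natCast_sq_real]
        ring

theorem sum_floor_sq_eq_general (a b : ℕ) (ha : 0 < a) (hab : Nat.Coprime a b) :
    ∑ m ∈ Finset.range a, ((m * b / a : ℕ) : ℝ) ^ 2
      = ((b : ℝ) ^ 2 + 1) * ((a : ℝ) - 1) * (2 * (a : ℝ) - 1) / (6 * a)
        - 2 * b * dedekindSum b a - (b : ℝ) * ((a : ℝ) - 1) / 2 := by
  have ha' : (a : ℝ) ≠ 0 := by positivity
  have key := sum_sq_div_mul_sq hab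
  rw [sum_mul_mul_mod_eq ha hab] at key
  rw [(eq_div_iff (pow_ne_zero 2 ha')).2 key]
  field_simp
  ring

theorem sum_floor_sq_eq (a b : ℕ) (ha : 0 < a) (hb : 0 < b) (hab : Nat.Coprime a b) :
    ∑ m ∈ Finset.range a, ((m * b / a : ℕ) : ℝ) ^ 2
      = ((b : ℝ) ^ 2 + 1) * ((a : ℝ) - 1) * (2 * (a : ℝ) - 1) / (6 * a)
        - 2 * b * dedekindSum b a - (b : ℝ) * ((a : ℝ) - 1) / 2 :=
  sum_floor_sq_eq_general a b ha hab
end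

section
/- Let a and b be positive integers and let l = a mod b with 2 ≤ l (so b ≥ 3). Then D_2(a;b) = ∑_{j=1}^{b−1} j²·(f_{a;b}(j) − ⌊a/b⌋) = ∑_{m=1}^{l−1} ⌊m·b/l⌋²; in particular D_2(a;b) = l·M_2(l;b) depends on a only through l ≡ a mod b. -/
/-- `f_{a;b}(j)`: the number of `m ∈ {0,…,a-1}` with `⌊m·b/a⌋ = j`. -/
def freq (a b j : ℕ) : ℕ := ((Finset.range a).filter (fun m => m * b / a = j)).card

/-!
Write `a = q * b + l`. For `j < b` the `m < a` with `⌊m b / a⌋ = j` form the interval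
`[⌈a j / b⌉, ⌈a (j + 1) / b⌉)`, and `⌈a j / b⌉ = q j + ⌈l j / b⌉`, so
`f_{a;b}(j) - q = f_{l;b}(j)`. Hence `D_2(a;b) = ∑_j j² f_{l;b}(j)`, which, grouping the `m < l`
by the value of `⌊m b / l⌋`, is `∑_{m < l} ⌊m b / l⌋²`.
-/

open Finset

namespace Nat

lemma lt_ceilDiv_iff_mul_lt {b : ℕ} (hb : 0 < b) {m x : ℕ} : m < x ⌈/⌉ b ↔ b * m < x := by
  rw [← not_le, ceilDiv_le_iff_le_smul hb, smul_eq_mul, not_le]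

lemma add_mul_ceilDiv_left {b : ℕ} (hb : 0 < b) (x y : ℕ) :
    (x + b * y) ⌈/⌉ b = x ⌈/⌉ b + y := by
  simp only [ceilDiv_eq_add_pred_div]
  rw [show x + b * y + b - 1 = x + b - 1 + y * b by grind, Nat.add_mul_div_right _ _ hb]

lemma div_eq_iff_mul_le_and_lt_mul {m n j : ℕ} (hn : 0 < n) :
    m / n = j ↔ n * j ≤ m ∧ m < n * (j + 1) := by
  rw [Nat.div_eq_iff hn, mul_comm n, mul_comm n, add_one_mul]
  omega

end Nat

lemma filter_range_mul_div_eq_Ico (n : ℕ) {b j : ℕ} (hb : 0 < b) (hj : j < b) :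
    (range n).filter (fun m => m * b / n = j) = Ico ((n * j) ⌈/⌉ b) ((n * (j + 1)) ⌈/⌉ b) := by
  rcases n.eq_zero_or_pos with rfl | hn
  · simp
  ext m
  simp only [mem_filter, mem_range, mem_Ico, Nat.div_eq_iff_mul_le_and_lt_mul hn,
    ceilDiv_le_iff_le_smul hb, smul_eq_mul, Nat.lt_ceilDiv_iff_mul_lt hb, mul_comm m b]
  refine ⟨fun h => h.2, fun h => ⟨?_, h⟩⟩
  exact Nat.lt_of_mul_lt_mul_left
    ((h.2.trans_le (Nat.mul_le_mul_left n hj)).trans_eq (mul_comm n b))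

lemma freq_eq_ceilDiv_sub (n : ℕ) {b j : ℕ} (hb : 0 < b) (hj : j < b) :
    freq n b j = (n * (j + 1)) ⌈/⌉ b - (n * j) ⌈/⌉ b := by
  rw [freq, filter_range_mul_div_eq_Ico n hb hj, Nat.card_Ico]

lemma freq_mul_add (q l : ℕ) {b j : ℕ} (hb : 0 < b) (hj : j < b) :
    freq (q * b + l) b j = q + freq l b j := by
  have hmono : (l * j) ⌈/⌉ b ≤ (l * (j + 1)) ⌈/⌉ b :=
    (gc_smul_ceilDiv hb).monotone_l (by gcongr; omega)
  simp only [freq_eq_ceilDiv_sub _ hb hj]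
  rw [show (q * b + l) * (j + 1) = l * (j + 1) + b * (q * (j + 1)) by ring,
    show (q * b + l) * j = l * j + b * (q * j) by ring,
    Nat.add_mul_ceilDiv_left hb, Nat.add_mul_ceilDiv_left hb]
  grind

lemma sum_pow_mul_freq {R : Type*} [CommSemiring R] (n k : ℕ) {b : ℕ} (hb : 0 < b) :
    ∑ j ∈ range b, (j : R) ^ k * freq n b j = ∑ m ∈ range n, ((m * b / n : ℕ) : R) ^ k := by
  have hmaps : ∀ m ∈ range n, m * b / n ∈ range b := by
    intro m hm
    rw [mem_range] at hm ⊢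
    rw [Nat.div_lt_iff_lt_mul (by omega), mul_comm b]
    exact Nat.mul_lt_mul_of_pos_right hm hb
  rw [← sum_fiberwise_of_maps_to hmaps]
  refine sum_congr rfl fun j _ => ?_
  rw [sum_congr rfl fun m hm => by rw [(mem_filter.mp hm).2], sum_const, nsmul_eq_mul, freq,
    mul_comm]

lemma sum_pow_mul_freq_sub_div {R : Type*} [CommRing R] (a k : ℕ) {b : ℕ} (hb : 0 < b) :
    ∑ j ∈ range b, (j : R) ^ k * ((freq a b j : R) - ((a / b : ℕ) : R))
      = ∑ m ∈ range (a % b), ((m * b / (a % b) : ℕ) : R) ^ k := by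
  rw [← sum_pow_mul_freq _ _ hb]
  refine sum_congr rfl fun j hj => ?_
  rw [← Nat.div_add_mod' a b, freq_mul_add _ _ hb (mem_range.mp hj), Nat.div_add_mod' a b]
  push_cast
  ring

lemma sum_Icc_one_sub_one_eq_sum_range {M : Type*} [AddCommMonoid M] {f : ℕ → M} (h0 : f 0 = 0)
    (n : ℕ) : ∑ i ∈ Icc 1 (n - 1), f i = ∑ i ∈ range n, f i := by
  refine sum_subset (fun i hi => ?_) fun i hi hi' => ?_
  · simp only [mem_Icc, mem_range] at hi ⊢; omega
  · obtain rfl : i = 0 := by simp only [mem_Icc, mem_range] at hi hi'; omega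
    exact h0

theorem D2_eq_sum_and_moment_general (a b : ℕ) (hb : 0 < b)
    (l : ℕ) (hl : l = a % b) :
    (∑ j ∈ Finset.Icc 1 (b - 1), (j : ℤ) ^ 2 * ((freq a b j : ℤ) - ((a / b : ℕ) : ℤ)))
        = ∑ m ∈ Finset.Icc 1 (l - 1), ((m * b / l : ℕ) : ℤ) ^ 2
    ∧ (∑ j ∈ Finset.Icc 1 (b - 1), (j : ℚ) ^ 2 * ((freq a b j : ℚ) - ((a / b : ℕ) : ℚ)))
        = (l : ℚ) * ((1 / (l : ℚ)) * ∑ m ∈ Finset.range l, ((m * b / l : ℕ) : ℚ) ^ 2) := by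
  subst hl
  rw [sum_Icc_one_sub_one_eq_sum_range, sum_Icc_one_sub_one_eq_sum_range,
    sum_Icc_one_sub_one_eq_sum_range, sum_pow_mul_freq_sub_div _ _ hb,
    sum_pow_mul_freq_sub_div _ _ hb]
  · refine ⟨rfl, ?_⟩
    rcases eq_or_ne (a % b) 0 with h0 | h0
    · simp [h0]
    · rw [one_div, mul_inv_cancel_left₀ (Nat.cast_ne_zero.mpr h0)]
  all_goals simp

theorem D2_eq_sum_and_moment (a b : ℕ) (ha : 0 < a) (hb : 0 < b)
    (l : ℕ) (hl : l = a % b) (h2 : 2 ≤ l) :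
    (∑ j ∈ Finset.Icc 1 (b - 1), (j : ℤ) ^ 2 * ((freq a b j : ℤ) - ((a / b : ℕ) : ℤ)))
        = ∑ m ∈ Finset.Icc 1 (l - 1), ((m * b / l : ℕ) : ℤ) ^ 2
    ∧ (∑ j ∈ Finset.Icc 1 (b - 1), (j : ℚ) ^ 2 * ((freq a b j : ℚ) - ((a / b : ℕ) : ℚ)))
        = (l : ℚ) * ((1 / (l : ℚ)) * ∑ m ∈ Finset.range l, ((m * b / l : ℕ) : ℚ) ^ 2) :=
  D2_eq_sum_and_moment_general a b hb l hl
end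

section
/- Let a and b be positive integers with b ≥ 3 and a ≡ 2 (mod b). Then D_2(a;b) = ⌊b/2⌋². -/
theorem my_div_eq_iff (a b c : ℕ) (hb : 0 < b) : a / b = c ↔ c * b ≤ a ∧ a < (c+1)*b := by
  constructor
  · rintro rfl
    exact ⟨Nat.div_mul_le_self a b, (Nat.div_lt_iff_lt_mul hb).mp (Nat.lt_succ_self _)⟩
  · rintro ⟨h1, h2⟩
    exact Nat.div_eq_of_lt_le h1 h2

theorem my_ceil_le (x b m : ℕ) (hb : 0 < b) : (x + b - 1)/b ≤ m ↔ x ≤ m * b := by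
  rw [Nat.div_le_iff_le_mul_add_pred hb, Nat.mul_comm]
  omega

theorem freq_eq_sub (a b j : ℕ) (ha : 0 < a) (hb : 0 < b) (hj : j + 1 ≤ b) :
    freq a b j = ((j+1)*a + b - 1)/b - (j*a + b - 1)/b := by
  have hfil : (Finset.range a).filter (fun m => m * b / a = j)
      = Finset.Ico ((j*a + b - 1)/b) (((j+1)*a + b - 1)/b) := by
    ext m
    simp only [Finset.mem_filter, Finset.mem_range, Finset.mem_Ico]
    rw [my_div_eq_iff _ _ _ ha, my_ceil_le _ _ _ hb]
    constructor
    · rintro ⟨hm, h1, h2⟩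
      refine ⟨h1, ?_⟩
      by_contra hc
      push_neg at hc
      exact absurd ((my_ceil_le _ _ _ hb).mp hc) (by omega)
    · rintro ⟨h1, h2⟩
      have h2' : m * b < (j+1) * a := by
        by_contra hc
        push_neg at hc
        exact absurd ((my_ceil_le _ _ _ hb).mpr hc) (by omega)
      have hma : m < a := by
        have : (j+1) * a ≤ b * a := Nat.mul_le_mul_right a hj
        have hmb : m * b < a * b := by
          calc m * b < (j+1)*a := h2'
          _ ≤ b * a := this
          _ = a * b := Nat.mul_comm b a
        exact Nat.lt_of_mul_lt_mul_right hmb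
      exact ⟨hma, h1, h2'⟩
  rw [freq, hfil, Nat.card_Ico]

theorem freq_val (a b j q : ℕ) (hb : 3 ≤ b) (ha : a = q * b + 2)
    (hj1 : 1 ≤ j) (hj2 : j ≤ b - 1) :
    freq a b j = q + (if j = b / 2 then 1 else 0) := by
  have hb0 : 0 < b := by omega
  have ha0 : 0 < a := by omega
  have inner : ∀ k, 1 ≤ k → k ≤ b → (2*k + b - 1)/b = if 2*k ≤ b then 1 else 2 := by
    intro k h1 h2
    split_ifs with hc
    · exact Nat.div_eq_of_lt_le (by omega) (by omega)
    · exact Nat.div_eq_of_lt_le (by omega) (by omega)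
  have cg : ∀ k, 1 ≤ k → k ≤ b → (k*a + b - 1)/b = k*q + (if 2*k ≤ b then 1 else 2) := by
    intro k h1 h2
    have e : k*a + b - 1 = b*(k*q) + (2*k + b - 1) := by
      subst ha
      have : k*(q*b+2) = b*(k*q) + 2*k := by ring
      omega
    rw [e, Nat.mul_add_div hb0, inner k h1 h2]
  rw [freq_eq_sub a b j ha0 hb0 (by omega), cg j hj1 (by omega), cg (j+1) (by omega) (by omega)]
  have e2 : (j+1)*q = j*q + q := by ring
  rw [e2]
  split_ifs <;> omega

theorem D2_of_two_mod (a b : ℕ) (ha : 0 < a) (hb : 3 ≤ b) (h : a % b = 2) :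
    (∑ j ∈ Finset.Icc 1 (b - 1), (j : ℤ) ^ 2 * ((freq a b j : ℤ) - ((a / b : ℕ) : ℤ)))
      = ((b / 2 : ℕ) : ℤ) ^ 2 := by
  have hb0 : 0 < b := by omega
  set q := a / b with hq
  have ha' : a = q * b + 2 := by
    have h2 : b * q + a % b = a := Nat.div_add_mod a b
    have h3 : b * q = q * b := Nat.mul_comm b q
    omega
  have hstep : ∀ j ∈ Finset.Icc 1 (b-1),
      (j : ℤ) ^ 2 * ((freq a b j : ℤ) - (q : ℤ))
        = if j = b / 2 then ((j:ℤ))^2 else 0 := by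
    intro j hj
    rw [Finset.mem_Icc] at hj
    rw [freq_val a b j q hb ha' hj.1 hj.2]
    push_cast
    split_ifs <;> ring
  rw [Finset.sum_congr rfl hstep, Finset.sum_ite_eq' (Finset.Icc 1 (b-1)) (b/2) (fun j => ((j:ℤ))^2)]
  rw [if_pos (by rw [Finset.mem_Icc]; omega)]
end

section
/- Let a and b be positive integers with a ≡ 0 (mod b) or a ≡ 1 (mod b). Then ∑_{m=0}^{a−1} ⌊m·b/a⌋² = ⌊a/b⌋·(b−1)·b·(2b−1)/6; that is, a·M_2(a;b) = ⌊a/b⌋·(b−1)·b·(2b−1)/6. -/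
lemma sumsq_aux (q : ℕ) (hq : 0 < q) : ∀ b : ℕ,
    ∑ m ∈ Finset.range (q * b), ((m / q : ℕ) : ℚ) ^ 2
      = (q : ℚ) * ((b : ℚ) - 1) * (b : ℚ) * (2 * (b : ℚ) - 1) / 6 := by
  intro b
  induction b with
  | zero => simp
  | succ b ih =>
    have hrange : q * (b + 1) = q * b + q := by ring
    rw [hrange, Finset.sum_range_add, ih]
    have h2 : ∀ i ∈ Finset.range q, (((q * b + i) / q : ℕ) : ℚ) ^ 2 = (b : ℚ) ^ 2 := by
      intro i hi
      simp only [Finset.mem_range] at hi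
      have h3 : (q * b + i) / q = b := by
        have := Nat.mul_add_div hq b i
        have : i / q = 0 := Nat.div_eq_of_lt hi
        omega
      rw [h3]
    rw [Finset.sum_congr rfl h2, Finset.sum_const, Finset.card_range]
    push_cast
    ring

lemma div_key (q b m : ℕ) (hq : 0 < q) (hb : 0 < b) (hm : m < q * b) :
    (m + 1) * b / (q * b + 1) = m / q := by
  set j := m / q with hj
  set s := m % q with hs
  have hsq : s < q := Nat.mod_lt _ hq
  have hmjs : m = q * j + s := (Nat.div_add_mod m q).symm
  have hjb : j < b := Nat.div_lt_of_lt_mul (by omega)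
  apply Nat.div_eq_of_lt_le
  · calc j * (q * b + 1) = j * q * b + j := by ring
      _ ≤ j * q * b + (s + 1) * b := by
          have : j ≤ (s + 1) * b := le_trans (le_of_lt hjb) (Nat.le_mul_of_pos_left b (by omega))
          omega
      _ = (m + 1) * b := by rw [hmjs]; ring
  · calc (m + 1) * b = j * q * b + (s + 1) * b := by rw [hmjs]; ring
      _ ≤ j * q * b + q * b := by
          have : (s + 1) * b ≤ q * b := Nat.mul_le_mul_right b (by omega)
          omega
      _ < (j + 1) * (q * b + 1) := by nlinarith

theorem aM2_of_zero_one_mod (a b : ℕ) (ha : 0 < a) (hb : 0 < b)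
    (h : a % b = 0 ∨ a % b = 1) :
    ∑ m ∈ Finset.range a, ((m * b / a : ℕ) : ℚ) ^ 2
      = ((a / b : ℕ) : ℚ) * ((b : ℚ) - 1) * (b : ℚ) * (2 * (b : ℚ) - 1) / 6 := by
  set q := a / b with hq
  have hmod := Nat.div_add_mod a b
  have hcomm : q * b = b * (a / b) := by rw [hq, Nat.mul_comm]
  rcases h with h | h
  · -- a = q * b
    have haq : a = q * b := by omega
    have hqpos : 0 < q := by
      rcases Nat.eq_zero_or_pos q with h0 | h0
      · rw [h0, Nat.zero_mul] at haq; omega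
      · exact h0
    have hterm : ∀ m ∈ Finset.range a,
        ((m * b / a : ℕ) : ℚ) ^ 2 = ((m / q : ℕ) : ℚ) ^ 2 := by
      intro m _
      rw [haq, Nat.mul_div_mul_right _ _ hb]
    rw [Finset.sum_congr rfl hterm, haq, sumsq_aux q hqpos b]
  · -- a = q * b + 1
    have haq : a = q * b + 1 := by omega
    rcases Nat.eq_zero_or_pos q with h0 | h0
    · have ha1 : a = 1 := by rw [h0, Nat.zero_mul] at haq; omega
      subst ha1
      simp [h0]
    · rw [haq, Finset.sum_range_succ']
      have hterm : ∀ m ∈ Finset.range (q * b),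
          (((m + 1) * b / (q * b + 1) : ℕ) : ℚ) ^ 2 = ((m / q : ℕ) : ℚ) ^ 2 := by
        intro m hm
        simp only [Finset.mem_range] at hm
        rw [div_key q b m h0 hb hm]
      rw [Finset.sum_congr rfl hterm, sumsq_aux q h0 b]
      simp
end

section
/- Let a and b be positive integers and let l = a mod b with 2 ≤ l ≤ b − 1. Then ⌊a/b⌋·(b−1)·b·(2b−1)/6 + ⌊b/l⌋²·(l−1)·l·(2l−1)/6 ≤ ∑_{m=0}^{a−1} ⌊m·b/a⌋² ≤ ⌊a/b⌋·(b−1)·b·(2b−1)/6 + ⌊b²·(l−1)·(2l−1)/(6l)⌋. -/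
/-!
Write a = q b + l. The number of m < a with m b < v a is ⌈v a / b⌉ = v q + ⌈v l / b⌉, so for
every v < b the value ⌊m b / a⌋ = v is taken exactly q times more often for m < a than
⌊j b / l⌋ = v is for j < l. Hence ∑_{m<a} f ⌊m b / a⌋ = q ∑_{v<b} f v + ∑_{j<l} f ⌊j b / l⌋
for every f. For f v = v² the remainder sum is squeezed termwise by
j ⌊b / l⌋ ≤ ⌊j b / l⌋ ≤ j b / l; the upper bound may be floored because the sum is an integer.
-/

open Finset Nat

theorem count_comp_lt_add_one (g : ℕ → ℕ) (v n : ℕ) :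
    count (fun m => g m < v + 1) n = count (fun m => g m < v) n + count (fun m => g m = v) n := by
  induction n with
  | zero => simp
  | succ n ih => simp only [count_succ]; split_ifs <;> omega

theorem count_mul_lt_mul_self_of_eq_mul_add {a b q l v : ℕ} (hab : b * q + l = a) (hv : v ≤ b) :
    count (fun m => m * b < v * a) a = v * q + count (fun j => j * b < v * l) l := by
  subst hab
  obtain ⟨c, rfl⟩ := Nat.exists_eq_add_of_le hv
  have hhead : count (fun m => m * (v + c) < v * ((v + c) * q + l)) (v * q) = v * q := by
    refine count_of_forall fun m hm => ?_
    have hv0 : 0 < v := Nat.pos_of_ne_zero fun hv0 => by simp [hv0] at hm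
    nlinarith
  have hshift : ∀ j, (v * q + j) * (v + c) < v * ((v + c) * q + l) ↔ j * (v + c) < v * l :=
    fun j => by constructor <;> intro h <;> nlinarith
  have htail : count (fun j => j * (v + c) < v * l) (l + c * q)
      = count (fun j => j * (v + c) < v * l) l := by
    rw [count_add, count_of_forall_not (p := fun k => (l + k) * (v + c) < v * l), add_zero]
    intro k _ h; nlinarith
  have hsplit := count_add (fun m => m * (v + c) < v * ((v + c) * q + l)) (v * q) (l + c * q)
  rw [show v * q + (l + c * q) = (v + c) * q + l by ring, hhead] at hsplit
  simpa only [hshift, htail] using hsplit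

theorem count_mul_div_lt {a b v : ℕ} (ha : 0 < a) (hv : v ≤ b) :
    count (fun m => m * b / a < v) a
      = v * (a / b) + count (fun j => j * b / (a % b) < v) (a % b) := by
  simp only [Nat.div_lt_iff_lt_mul ha]
  rcases (a % b).eq_zero_or_pos with hl | hl
  · simpa [hl] using count_mul_lt_mul_self_of_eq_mul_add (Nat.div_add_mod a b) hv
  · simpa only [Nat.div_lt_iff_lt_mul hl] using
      count_mul_lt_mul_self_of_eq_mul_add (Nat.div_add_mod a b) hv

theorem count_mul_div_eq {a b v : ℕ} (ha : 0 < a) (hv : v < b) :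
    count (fun m => m * b / a = v) a = a / b + count (fun j => j * b / (a % b) = v) (a % b) := by
  have h := count_mul_div_lt ha hv.le
  have hs := count_mul_div_lt (v := v + 1) ha hv
  rw [count_comp_lt_add_one (fun m => m * b / a), count_comp_lt_add_one (fun j => j * b / (a % b)),
    add_one_mul, h] at hs
  omega

theorem sum_range_comp_mul_div {M : Type*} [AddCommMonoid M] (f : ℕ → M) {a b : ℕ}
    (ha : 0 < a) (hb : 0 < b) :
    ∑ m ∈ range a, f (m * b / a)
      = (a / b) • ∑ v ∈ range b, f v + ∑ j ∈ range (a % b), f (j * b / (a % b)) := by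
  have hmaps : ∀ n, ∀ m ∈ range n, m * b / n ∈ range b := fun n m hm =>
    mem_range.2 (Nat.div_lt_of_lt_mul (Nat.mul_lt_mul_of_pos_right (mem_range.1 hm) hb))
  rw [← sum_fiberwise_of_maps_to' (hmaps a), ← sum_fiberwise_of_maps_to' (hmaps (a % b)),
    smul_sum, ← sum_add_distrib]
  refine sum_congr rfl fun v hv => ?_
  simp only [sum_const, ← count_eq_card_filter_range, count_mul_div_eq ha (mem_range.1 hv),
    add_smul]

theorem sum_range_cast_sq {K : Type*} [Field K] [CharZero K] (n : ℕ) :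
    ∑ v ∈ range n, (v : K) ^ 2 = n * (n - 1) * (2 * n - 1) / 6 := by
  induction n with
  | zero => simp
  | succ n ih => rw [sum_range_succ, ih]; push_cast; ring

theorem sq_div_mul_sum_sq_le (b l : ℕ) :
    (b / l) ^ 2 * ∑ j ∈ range l, j ^ 2 ≤ ∑ j ∈ range l, (j * b / l) ^ 2 := by
  rw [mul_sum]
  refine sum_le_sum fun j _ => ?_
  rw [← mul_pow, mul_comm]
  exact Nat.pow_le_pow_left (Nat.mul_div_le_mul_div_assoc j b l) 2

theorem sum_sq_mul_div_le {l : ℕ} (hl : 0 < l) (b : ℕ) :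
    ∑ j ∈ range l, (j * b / l) ^ 2 ≤ b ^ 2 * (l - 1) * (2 * l - 1) / (6 * l) := by
  rw [← Nat.floor_div_eq_div (K := ℚ), Nat.le_floor_iff (by positivity)]
  have hl' : (l : ℚ) ≠ 0 := by positivity
  calc ((∑ j ∈ range l, (j * b / l) ^ 2 : ℕ) : ℚ)
      ≤ ∑ j ∈ range l, ((j : ℚ) * b / l) ^ 2 := by
        push_cast
        exact sum_le_sum fun j _ => pow_le_pow_left₀ (Nat.cast_nonneg _)
          (by simpa using Nat.cast_div_le (α := ℚ) (m := j * b) (n := l)) 2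
    _ = ((b : ℚ) / l) ^ 2 * ∑ j ∈ range l, (j : ℚ) ^ 2 := by
        rw [mul_sum]; exact sum_congr rfl fun j _ => by ring
    _ = _ := by
        rw [sum_range_cast_sq]
        push_cast [Nat.cast_sub (show 1 ≤ l from hl), Nat.cast_sub (show 1 ≤ 2 * l by omega)]
        field_simp

theorem aM2_bounds_general (a b : ℕ) (ha : 0 < a) (hb : 0 < b)
    (l : ℕ) (hl : l = a % b) (h2 : 2 ≤ l) :
    ((a / b : ℕ) : ℚ) * ((b : ℚ) - 1) * (b : ℚ) * (2 * (b : ℚ) - 1) / 6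
        + ((b / l : ℕ) : ℚ) ^ 2 * ((l : ℚ) - 1) * (l : ℚ) * (2 * (l : ℚ) - 1) / 6
      ≤ ∑ m ∈ Finset.range a, ((m * b / a : ℕ) : ℚ) ^ 2
    ∧ ∑ m ∈ Finset.range a, ((m * b / a : ℕ) : ℚ) ^ 2
      ≤ ((a / b : ℕ) : ℚ) * ((b : ℚ) - 1) * (b : ℚ) * (2 * (b : ℚ) - 1) / 6
        + ((b ^ 2 * (l - 1) * (2 * l - 1) / (6 * l) : ℕ) : ℚ) := by
  subst hl
  have hlower : (((b / (a % b)) ^ 2 * ∑ j ∈ range (a % b), j ^ 2 : ℕ) : ℚ)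
      ≤ ((∑ j ∈ range (a % b), (j * b / (a % b)) ^ 2 : ℕ) : ℚ) :=
    Nat.cast_le.2 (sq_div_mul_sum_sq_le b (a % b))
  have hupper := Nat.cast_le (α := ℚ).2 (sum_sq_mul_div_le (by omega : 0 < a % b) b)
  push_cast [sum_range_cast_sq] at hlower hupper
  rw [sum_range_comp_mul_div (fun v => (v : ℚ) ^ 2) ha hb, nsmul_eq_mul, sum_range_cast_sq]
  constructor <;> linarith

theorem aM2_bounds (a b : ℕ) (ha : 0 < a) (hb : 0 < b)
    (l : ℕ) (hl : l = a % b) (h2 : 2 ≤ l) (hlb : l ≤ b - 1) :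
    ((a / b : ℕ) : ℚ) * ((b : ℚ) - 1) * (b : ℚ) * (2 * (b : ℚ) - 1) / 6
        + ((b / l : ℕ) : ℚ) ^ 2 * ((l : ℚ) - 1) * (l : ℚ) * (2 * (l : ℚ) - 1) / 6
      ≤ ∑ m ∈ Finset.range a, ((m * b / a : ℕ) : ℚ) ^ 2
    ∧ ∑ m ∈ Finset.range a, ((m * b / a : ℕ) : ℚ) ^ 2
      ≤ ((a / b : ℕ) : ℚ) * ((b : ℚ) - 1) * (b : ℚ) * (2 * (b : ℚ) - 1) / 6
        + ((b ^ 2 * (l - 1) * (2 * l - 1) / (6 * l) : ℕ) : ℚ) :=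
  aM2_bounds_general a b ha hb l hl h2
end

section
/- Let a and b be positive integers, let l = a mod b with 2 ≤ l ≤ b − 1, and let k = b mod l. If k = 0 or k = 1, then D_2(a;b) = ⌊b/l⌋²·(l−1)·l·(2l−1)/6. If k = 2, then D_2(a;b) = ⌊b/l⌋²·(l−1)·l·(2l−1)/6 + ⌊b/l⌋·((l−1)·l − l·(l−2)/4) + l/2 when l is even, and D_2(a;b) = ⌊b/l⌋²·(l−1)·l·(2l−1)/6 + ⌊b/l⌋·((l−1)·l − ⌊l/2⌋·(1 + ⌊l/2⌋)) + ⌊l/2⌋ when l is odd. -/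
open Finset

/-- `D_2(a;b) = ∑_{j=1}^{b-1} j²·(f_{a;b}(j) − ⌊a/b⌋)`, as a rational number. -/
def D2 (a b : ℕ) : ℚ :=
  ∑ j ∈ Finset.Icc 1 (b - 1), (j : ℚ) ^ 2 * ((freq a b j : ℚ) - ((a / b : ℕ) : ℚ))

lemma ceil_le_iff' {b : ℕ} (hb : 0 < b) (x m : ℕ) : (x + (b - 1)) / b ≤ m ↔ x ≤ m * b := by
  rw [Nat.div_le_iff_le_mul_add_pred hb, mul_comm m b]
  omega

lemma freq_eq (a b j : ℕ) (ha : 0 < a) (hb : 0 < b) (hj : j + 1 ≤ b) :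
    freq a b j = ((j + 1) * a + (b - 1)) / b - (j * a + (b - 1)) / b := by
  have key : (Finset.range a).filter (fun m => m * b / a = j)
      = Finset.Ico ((j * a + (b - 1)) / b) (((j + 1) * a + (b - 1)) / b) := by
    ext m
    simp only [mem_filter, mem_range, mem_Ico]
    constructor
    · rintro ⟨hm, hdiv⟩
      have h1 : j * a ≤ m * b := by
        rw [← Nat.le_div_iff_mul_le ha, hdiv]
      have h2 : ¬ (j + 1) * a ≤ m * b := by
        rw [← Nat.le_div_iff_mul_le ha, hdiv]; omega
      refine ⟨(ceil_le_iff' hb _ m).2 h1, ?_⟩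
      by_contra hcon
      exact h2 ((ceil_le_iff' hb _ m).1 (le_of_not_gt hcon))
    · rintro ⟨h1, h2⟩
      have h1' : j * a ≤ m * b := (ceil_le_iff' hb _ m).1 h1
      have h2' : m * b < (j + 1) * a := by
        by_contra hcon
        exact absurd ((ceil_le_iff' hb _ m).2 (le_of_not_gt hcon)) (not_le.2 h2)
      have hm : m < a := by
        have h3 : m * b < b * a := lt_of_lt_of_le h2' (Nat.mul_le_mul_right a hj)
        rw [mul_comm b a] at h3
        exact Nat.lt_of_mul_lt_mul_right h3
      refine ⟨hm, ?_⟩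
      have hle : j ≤ m * b / a := (Nat.le_div_iff_mul_le ha).2 h1'
      have hlt : m * b / a < j + 1 := Nat.div_lt_of_lt_mul (by rwa [mul_comm a (j + 1)])
      omega
  rw [freq, key, Nat.card_Ico]

lemma D2_eq (a b l : ℕ) (ha : 0 < a) (hb : 0 < b) (hl : l = a % b) (hl1 : 1 ≤ l) :
    D2 a b = ∑ i ∈ Finset.Icc 1 (l - 1), ((i * b / l : ℕ) : ℚ) ^ 2 := by
  have hlpos : 0 < l := hl1
  have hlb : l < b := hl ▸ Nat.mod_lt a hb
  set q := a / b with hq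
  have hab : a = b * q + l := by rw [hl, hq]; exact (Nat.div_add_mod a b).symm
  set d : ℕ → ℕ := fun j => (j * l + (b - 1)) / b with hd
  have hdmono : ∀ j, d j ≤ d (j + 1) := fun j =>
    Nat.div_le_div_right (Nat.add_le_add_right (Nat.mul_le_mul_right l (Nat.le_succ j)) _)
  have hc : ∀ j, (j * a + (b - 1)) / b = j * q + d j := by
    intro j
    have h : j * a + (b - 1) = b * (j * q) + (j * l + (b - 1)) := by rw [hab]; ring
    rw [h, Nat.mul_add_div hb]
  -- the fibers
  have hfiber : ∀ j ∈ Finset.Icc 1 (b - 1),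
      (Finset.Icc 1 (l - 1)).filter (fun i => i * b / l = j) = Finset.Ico (d j) (d (j + 1)) := by
    intro j hj
    simp only [Finset.mem_Icc] at hj
    ext i
    simp only [mem_filter, mem_Icc, mem_Ico, hd]
    rw [show (j + 1) * l + (b - 1) = ((j + 1) * l) + (b - 1) from rfl]
    constructor
    · rintro ⟨⟨hi1, hi2⟩, hdiv⟩
      have h1 : j * l ≤ i * b := by rw [← Nat.le_div_iff_mul_le hlpos, hdiv]
      have h2 : ¬ (j + 1) * l ≤ i * b := by rw [← Nat.le_div_iff_mul_le hlpos, hdiv]; omega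
      refine ⟨(ceil_le_iff' hb _ i).2 h1, ?_⟩
      by_contra hcon
      exact h2 ((ceil_le_iff' hb _ i).1 (le_of_not_gt hcon))
    · rintro ⟨h1, h2⟩
      have h1' : j * l ≤ i * b := (ceil_le_iff' hb _ i).1 h1
      have h2' : i * b < (j + 1) * l := by
        by_contra hcon
        exact absurd ((ceil_le_iff' hb _ i).2 (le_of_not_gt hcon)) (not_le.2 h2)
      have hi1 : 1 ≤ i := by
        rcases Nat.eq_zero_or_pos i with h | h
        · exfalso; rw [h] at h1'; simp at h1'
          have := Nat.mul_pos (show 0 < j by omega) hlpos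
          omega
        · exact h
      have hil : i < l := by
        have h3 : i * b < l * b := by
          calc i * b < (j + 1) * l := h2'
            _ ≤ b * l := Nat.mul_le_mul_right l (by omega)
            _ = l * b := mul_comm b l
        exact Nat.lt_of_mul_lt_mul_right h3
      have hle : j ≤ i * b / l := (Nat.le_div_iff_mul_le hlpos).2 h1'
      have hlt : i * b / l < j + 1 := Nat.div_lt_of_lt_mul (by rwa [mul_comm l (j + 1)])
      exact ⟨⟨hi1, by omega⟩, by omega⟩
  -- termwise rewrite of D2
  have step1 : D2 a b = ∑ j ∈ Finset.Icc 1 (b - 1),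
      ∑ i ∈ (Finset.Icc 1 (l - 1)).filter (fun i => i * b / l = j), (j : ℚ) ^ 2 := by
    rw [D2]
    refine Finset.sum_congr rfl fun j hj => ?_
    have hj' := hj
    simp only [Finset.mem_Icc] at hj'
    have hjb : j + 1 ≤ b := by omega
    rw [freq_eq a b j ha hb hjb, Finset.sum_const, nsmul_eq_mul, hfiber j hj, Nat.card_Ico]
    have hcle : j * q + d j ≤ (j + 1) * q + d (j + 1) :=
      Nat.add_le_add (Nat.mul_le_mul_right q (Nat.le_succ j)) (hdmono j)
    rw [hc, hc]
    rw [Nat.cast_sub hcle, Nat.cast_sub (hdmono j)]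
    push_cast
    ring
  rw [step1]
  have hmaps : ∀ i ∈ Finset.Icc 1 (l - 1), i * b / l ∈ Finset.Icc 1 (b - 1) := by
    intro i hi
    simp only [Finset.mem_Icc] at hi ⊢
    constructor
    · exact (Nat.le_div_iff_mul_le hlpos).2 (by nlinarith [hi.1, le_of_lt hlb])
    · have h5 : i * b / l < b := Nat.div_lt_of_lt_mul
        ((Nat.mul_lt_mul_right hb).2 (show i < l by omega))
      omega
  exact Finset.sum_fiberwise_of_maps_to' (s := Finset.Icc 1 (l - 1))
    (t := Finset.Icc 1 (b - 1)) (g := fun i => i * b / l) hmaps (fun j => (j : ℚ) ^ 2)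

lemma sum_id_Ico (n : ℕ) : ∑ i ∈ Finset.Ico 1 n, (i : ℚ) = (n : ℚ) * ((n : ℚ) - 1) / 2 := by
  induction n with
  | zero => simp
  | succ n ih =>
    rcases Nat.eq_zero_or_pos n with h | h
    · subst h; simp
    · rw [Finset.sum_Ico_succ_top h, ih]; push_cast; ring

lemma sum_sq_Ico (n : ℕ) : ∑ i ∈ Finset.Ico 1 n, (i : ℚ) ^ 2
    = (n : ℚ) * ((n : ℚ) - 1) * (2 * (n : ℚ) - 1) / 6 := by
  induction n with
  | zero => simp
  | succ n ih =>
    rcases Nat.eq_zero_or_pos n with h | h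
    · subst h; simp
    · rw [Finset.sum_Ico_succ_top h, ih]; push_cast; ring

lemma D2_k2 (a b l : ℕ) (ha : 0 < a) (hb : 0 < b) (hl : l = a % b) (h2 : 2 ≤ l)
    (hk2 : b % l = 2) :
    D2 a b = ((b / l : ℕ) : ℚ) ^ 2 * ((l : ℚ) * ((l : ℚ) - 1) * (2 * (l : ℚ) - 1) / 6)
      + 2 * ((b / l : ℕ) : ℚ) * ((l : ℚ) * ((l : ℚ) - 1) / 2
          - (((l + 1) / 2 : ℕ) : ℚ) * ((((l + 1) / 2 : ℕ) : ℚ) - 1) / 2)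
      + ((l : ℚ) - (((l + 1) / 2 : ℕ) : ℚ)) := by
  have hlpos : 0 < l := by omega
  have hlb : l < b := hl ▸ Nat.mod_lt a hb
  have hD := D2_eq a b l ha hb hl (by omega)
  have hIccIco : Finset.Icc 1 (l - 1) = Finset.Ico 1 l := by
    rw [← Finset.Ico_add_one_right_eq_Icc]; congr 1; omega
  set s := b / l with hs
  set t := (l + 1) / 2 with ht
  have hbs : b = l * s + 2 := by rw [← hk2, hs]; exact (Nat.div_add_mod b l).symm
  have h1t : 1 ≤ t := by omega
  have htl : t ≤ l := by omega
  have hterm : ∀ i, 1 ≤ i → i < l →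
      i * b / l = i * s + (if l ≤ 2 * i then 1 else 0) := by
    intro i hi1 hi2
    have h1 : i * b = l * (i * s) + 2 * i := by rw [hbs]; ring
    rw [h1, Nat.mul_add_div hlpos]
    congr 1
    by_cases hc : l ≤ 2 * i
    · rw [if_pos hc]
      exact Nat.div_eq_of_lt_le (by omega) (by omega)
    · rw [if_neg hc]
      exact Nat.div_eq_of_lt (by omega)
  have hsplit : D2 a b = (∑ i ∈ Finset.Ico 1 t, ((s : ℚ) * (i : ℚ)) ^ 2)
      + ∑ i ∈ Finset.Ico t l, ((s : ℚ) * (i : ℚ) + 1) ^ 2 := by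
    rw [hD, hIccIco, ← Finset.sum_Ico_consecutive _ h1t htl]
    congr 1
    · refine Finset.sum_congr rfl fun i hi => ?_
      simp only [Finset.mem_Ico] at hi
      rw [hterm i hi.1 (by omega), if_neg (by omega)]
      push_cast; ring
    · refine Finset.sum_congr rfl fun i hi => ?_
      simp only [Finset.mem_Ico] at hi
      rw [hterm i (by omega) hi.2, if_pos (by omega)]
      push_cast; ring
  have e2 : ∑ i ∈ Finset.Ico t l, (i : ℚ) ^ 2
      = (l : ℚ) * ((l : ℚ) - 1) * (2 * (l : ℚ) - 1) / 6
        - (t : ℚ) * ((t : ℚ) - 1) * (2 * (t : ℚ) - 1) / 6 := by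
    have hcons := Finset.sum_Ico_consecutive (fun i : ℕ => (i : ℚ) ^ 2) h1t htl
    rw [sum_sq_Ico, sum_sq_Ico] at hcons
    have := sum_sq_Ico t
    linarith
  have e1 : ∑ i ∈ Finset.Ico t l, (i : ℚ)
      = (l : ℚ) * ((l : ℚ) - 1) / 2 - (t : ℚ) * ((t : ℚ) - 1) / 2 := by
    have hcons := Finset.sum_Ico_consecutive (fun i : ℕ => (i : ℚ)) h1t htl
    rw [sum_id_Ico, sum_id_Ico] at hcons
    have := sum_id_Ico t
    linarith
  have e0 : ((Finset.Ico t l).card : ℚ) = (l : ℚ) - (t : ℚ) := by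
    rw [Nat.card_Ico, Nat.cast_sub htl]
  have ha1 : ∑ i ∈ Finset.Ico 1 t, ((s : ℚ) * (i : ℚ)) ^ 2
      = (s : ℚ) ^ 2 * ∑ i ∈ Finset.Ico 1 t, (i : ℚ) ^ 2 := by
    rw [Finset.mul_sum]
    exact Finset.sum_congr rfl fun i _ => by ring
  have ha2 : ∑ i ∈ Finset.Ico t l, ((s : ℚ) * (i : ℚ) + 1) ^ 2
      = (s : ℚ) ^ 2 * (∑ i ∈ Finset.Ico t l, (i : ℚ) ^ 2)
        + 2 * (s : ℚ) * (∑ i ∈ Finset.Ico t l, (i : ℚ)) + ((Finset.Ico t l).card : ℚ) := by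
    rw [Finset.mul_sum, Finset.mul_sum, Finset.card_eq_sum_ones, Nat.cast_sum]
    rw [← Finset.sum_add_distrib, ← Finset.sum_add_distrib]
    exact Finset.sum_congr rfl fun i _ => by push_cast; ring
  rw [hsplit, ha1, ha2, e0, e1, e2, sum_sq_Ico]
  ring

theorem D2_refined (a b : ℕ) (ha : 0 < a) (hb : 0 < b)
    (l : ℕ) (hl : l = a % b) (h2 : 2 ≤ l) (hlb : l ≤ b - 1)
    (k : ℕ) (hk : k = b % l) :
    ((k = 0 ∨ k = 1) →
      D2 a b = ((b / l : ℕ) : ℚ) ^ 2 * ((l : ℚ) - 1) * (l : ℚ) * (2 * (l : ℚ) - 1) / 6)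
    ∧ (k = 2 → Even l →
      D2 a b = ((b / l : ℕ) : ℚ) ^ 2 * ((l : ℚ) - 1) * (l : ℚ) * (2 * (l : ℚ) - 1) / 6
        + ((b / l : ℕ) : ℚ) * (((l : ℚ) - 1) * (l : ℚ) - (l : ℚ) * ((l : ℚ) - 2) / 4)
        + (l : ℚ) / 2)
    ∧ (k = 2 → Odd l →
      D2 a b = ((b / l : ℕ) : ℚ) ^ 2 * ((l : ℚ) - 1) * (l : ℚ) * (2 * (l : ℚ) - 1) / 6
        + ((b / l : ℕ) : ℚ) * (((l : ℚ) - 1) * (l : ℚ) - ((l / 2 : ℕ) : ℚ) * (1 + ((l / 2 : ℕ) : ℚ)))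
        + ((l / 2 : ℕ) : ℚ)) := by
  have hlpos : 0 < l := by omega
  have hlb' : l < b := hl ▸ Nat.mod_lt a hb
  refine ⟨?_, ?_, ?_⟩
  · intro hk01
    have hD := D2_eq a b l ha hb hl (by omega)
    have hIccIco : Finset.Icc 1 (l - 1) = Finset.Ico 1 l := by
      rw [← Finset.Ico_add_one_right_eq_Icc]; congr 1; omega
    set s := b / l with hs
    have hbs : b = l * s + k := by rw [hk, hs]; exact (Nat.div_add_mod b l).symm
    have hterm : ∀ i ∈ Finset.Ico 1 l,
        ((i * b / l : ℕ) : ℚ) ^ 2 = (s : ℚ) ^ 2 * (i : ℚ) ^ 2 := by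
      intro i hi
      simp only [Finset.mem_Ico] at hi
      have h1 : i * b = l * (i * s) + i * k := by rw [hbs]; ring
      have h2' : i * k < l := by
        rcases hk01 with h | h
        · rw [h, Nat.mul_zero]; omega
        · rw [h, Nat.mul_one]; omega
      rw [h1, Nat.mul_add_div hlpos, Nat.div_eq_of_lt h2', Nat.add_zero]
      push_cast; ring
    rw [hD, hIccIco, Finset.sum_congr rfl hterm, ← Finset.mul_sum, sum_sq_Ico]
    ring
  · intro hk2 hev
    obtain ⟨m, hm⟩ := hev
    have hkey := D2_k2 a b l ha hb hl h2 (by omega)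
    rw [hkey, show ((l + 1) / 2 : ℕ) = m from by omega, show l = 2 * m from by omega]
    push_cast
    ring
  · intro hk2 hodd
    obtain ⟨m, hm⟩ := hodd
    have hkey := D2_k2 a b l ha hb hl h2 (by omega)
    rw [hkey, show ((l + 1) / 2 : ℕ) = m + 1 from by omega,
      show (l / 2 : ℕ) = m from by omega, show l = 2 * m + 1 from by omega]
    push_cast
    ring
end

section
/- Let a ≥ 3 be an integer. If a is odd, then S_2(a; 2, a) = (a−1)/2 − ⌊a/2⌋·(1 + ⌊a/2⌋)/(2a); if a is even, then S_2(a; 2, a) = (a−1)/2 − (1/4)·(a/2 − 1). -/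
/-- `S_2(a;b,c) = (1/a)·∑_{m=0}^{a−1} ⌊m·b/a⌋·⌊m·c/a⌋`. -/
def S2 (a b c : ℕ) : ℚ :=
  (1 / (a : ℚ)) * ∑ m ∈ Finset.range a, ((m * b / a : ℕ) : ℚ) * ((m * c / a : ℕ) : ℚ)

/-!
Since `⌊m·a/a⌋ = m` and `⌊2m/a⌋` is `0` for `m < ⌈a/2⌉` and `1` for `⌈a/2⌉ ≤ m < a`,
`a · S_2(a; 2, a)` is the sum of the integers in `[⌈a/2⌉, a)`, which Gauss's formula evaluates.
-/

open Finset

theorem two_mul_sum_Ico_cast {R : Type*} [CommRing R] {lo hi : ℕ} (h : lo ≤ hi) :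
    2 * ∑ m ∈ Ico lo hi, (m : R) = hi * (hi - 1) - lo * (lo - 1) := by
  induction hi, h using Nat.le_induction with
  | base => simp
  | succ n hn ih =>
    rw [sum_Ico_succ_top hn, mul_add, ih]
    push_cast
    ring

theorem mul_two_div_mul_mul_self_div_eq_ite {a m : ℕ} (hm : m < a) :
    m * 2 / a * (m * a / a) = if (a + 1) / 2 ≤ m then m else 0 := by
  rw [Nat.mul_div_cancel m (by omega)]
  split_ifs with h
  · rw [Nat.div_eq_of_lt_le (k := 1) (by omega) (by omega), one_mul]
  · rw [Nat.div_eq_of_lt (by omega), zero_mul]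

theorem S2_two_self (a : ℕ) : S2 a 2 a = (∑ m ∈ Ico ((a + 1) / 2) a, (m : ℚ)) / a := by
  have hterm : ∀ m ∈ range a, ((m * 2 / a : ℕ) : ℚ) * ((m * a / a : ℕ) : ℚ)
      = if (a + 1) / 2 ≤ m then (m : ℚ) else 0 := fun m hm => by
    rw [← Nat.cast_mul, mul_two_div_mul_mul_self_div_eq_ite (mem_range.1 hm), Nat.cast_ite,
      Nat.cast_zero]
  rw [S2, sum_congr rfl hterm, ← sum_filter, range_eq_Ico, Ico_filter_le,
    max_eq_right (Nat.zero_le _), one_div_mul_eq_div]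

theorem S2_two_a (a : ℕ) (ha : 3 ≤ a) :
    (Odd a → S2 a 2 a = ((a : ℚ) - 1) / 2
      - ((a / 2 : ℕ) : ℚ) * (1 + ((a / 2 : ℕ) : ℚ)) / (2 * a))
    ∧ (Even a → S2 a 2 a = ((a : ℚ) - 1) / 2 - (1/4) * ((a : ℚ) / 2 - 1)) := by
  rw [S2_two_self]
  constructor
  · rintro ⟨k, rfl⟩
    rw [show (2 * k + 1 + 1) / 2 = k + 1 by omega, show (2 * k + 1) / 2 = k by omega]
    have hsum := two_mul_sum_Ico_cast (R := ℚ) (show k + 1 ≤ 2 * k + 1 by omega)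
    push_cast at hsum ⊢
    field_simp
    linear_combination hsum
  · rintro ⟨k, rfl⟩
    rw [show (k + k + 1) / 2 = k by omega]
    have hsum := two_mul_sum_Ico_cast (R := ℚ) (show k ≤ k + k by omega)
    have hk : (k : ℚ) ≠ 0 := by exact_mod_cast (show k ≠ 0 by omega)
    push_cast at hsum ⊢
    field_simp
    linear_combination 4 * hsum
end

section
/- Let a ≥ 4 be an integer and let l, l' be integers with 1 < l < a, 1 < l' < a and l ≠ l'. Then the three vectors v_a, v_l, v_{l'} in ℝ^{a−1} are linearly independent, where v_b = (⌊b/a⌋, ⌊2b/a⌋, …, ⌊(a−1)·b/a⌋). -/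
/-- The vector `v_b = (⌊b/a⌋, ⌊2b/a⌋, …, ⌊(a−1)b/a⌋)` in `ℝ^{a−1}`. -/
def vvec (a b : ℕ) : Fin (a - 1) → ℝ := fun i => (((i : ℕ) + 1) * b / a : ℕ)

lemma last_div (a l : ℕ) (hl1 : 1 ≤ l) (hl2 : l < a) : (a - 1) * l / a = l - 1 := by
  have h : (a - 1) * l = (a - l) + (l - 1) * a := by
    zify [hl1, hl2.le, show (1:ℕ) ≤ a by omega]
    ring
  rw [h, Nat.add_mul_div_right _ _ (show 0 < a by omega),
    Nat.div_eq_of_lt (by omega), zero_add]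

lemma key (a l l' : ℕ) (ha : 4 ≤ a) (hl1 : 1 < l) (hll' : l < l') (hl'2 : l' < a)
    (g1 g2 : ℝ)
    (h : ∀ k, 1 ≤ k → k ≤ a - 1 →
      g1 * ((k * l / a : ℕ) : ℝ) + g2 * ((k * l' / a : ℕ) : ℝ) = 0) :
    g1 = 0 ∧ g2 = 0 := by
  set k0 := (a - 1) / l' + 1 with hk0
  have hdm := Nat.div_add_mod' (a - 1) l'
  have hmlt : (a - 1) % l' < l' := Nat.mod_lt _ (by omega)
  have hnn : 1 ≤ (a - 1) / l' + 1 := Nat.le_add_left 1 _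
  have htnn : 0 ≤ (a - 1) / l' * l' := Nat.zero_le _
  have hprod : k0 * l' = (a - 1) / l' * l' + l' := by rw [hk0]; ring
  have h2 : a - 1 < k0 * l' := by omega
  have h3 : k0 * l' ≤ a - 1 + l' := by omega
  have hk0a : k0 ≤ a - 1 := by
    have : (a - 1) / l' ≤ (a - 1) / 2 :=
      Nat.div_le_div_left (show 2 ≤ l' by omega) (by norm_num)
    omega
  have hfl' : k0 * l' / a = 1 := Nat.div_eq_of_lt_le (by omega) (by omega)
  have hfl : k0 * l / a ≤ 1 := by
    calc k0 * l / a ≤ k0 * l' / a := Nat.div_le_div_right (Nat.mul_le_mul_left _ hll'.le)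
    _ = 1 := hfl'
  have e1 := h k0 (by omega) hk0a
  have e2 := h (a - 1) (by omega) le_rfl
  rw [last_div a l (by omega) (by omega), last_div a l' (by omega) (by omega)] at e2
  rw [hfl'] at e1
  have hcl : ((l - 1 : ℕ) : ℝ) = (l : ℝ) - 1 := by rw [Nat.cast_sub (by omega), Nat.cast_one]
  have hcl' : ((l' - 1 : ℕ) : ℝ) = (l' : ℝ) - 1 := by rw [Nat.cast_sub (by omega), Nat.cast_one]
  rw [hcl, hcl'] at e2
  have hlR : (l : ℝ) < l' := by exact_mod_cast hll'
  have hl1R : (1 : ℝ) < l := by exact_mod_cast hl1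
  interval_cases hc : (k0 * l / a)
  · simp only [Nat.cast_zero, Nat.cast_one, mul_zero, mul_one, zero_add] at e1
    have hg1 : g1 = 0 := by
      have h4 : g1 * ((l : ℝ) - 1) = 0 := by linear_combination e2 - ((l':ℝ) - 1) * e1
      rcases mul_eq_zero.mp h4 with h | h
      · exact h
      · linarith
    exact ⟨hg1, e1⟩
  · simp only [Nat.cast_one, mul_one] at e1
    have h4 : g1 * ((l : ℝ) - l') = 0 := by linear_combination e2 - ((l':ℝ) - 1) * e1
    rcases mul_eq_zero.mp h4 with h | h
    · exact ⟨h, by linarith⟩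
    · linarith

theorem vectors_linearIndependent (a : ℕ) (ha : 4 ≤ a)
    (l l' : ℕ) (hl1 : 1 < l) (hl2 : l < a) (hl'1 : 1 < l') (hl'2 : l' < a)
    (hne : l ≠ l') :
    LinearIndependent ℝ ![vvec a a, vvec a l, vvec a l'] := by
  rw [Fintype.linearIndependent_iff]
  intro g hg
  have H : ∀ k : ℕ, 1 ≤ k → k ≤ a - 1 →
      g 0 * k + g 1 * ((k * l / a : ℕ) : ℝ) + g 2 * ((k * l' / a : ℕ) : ℝ) = 0 := by
    intro k hk1 hk2
    have hj : k - 1 < a - 1 := by omega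
    have hcf := congrFun hg ⟨k - 1, hj⟩
    simp only [Fin.sum_univ_three, Matrix.cons_val_zero, Matrix.cons_val_one, Matrix.head_cons,
      Matrix.cons_val_two, Matrix.tail_cons, Pi.add_apply, Pi.smul_apply, smul_eq_mul,
      Pi.zero_apply, vvec] at hcf
    have hk : k - 1 + 1 = k := by omega
    have hka : k * a / a = k := by
      rw [mul_comm]; exact Nat.mul_div_cancel_left k (by omega)
    rw [hk, hka] at hcf
    exact hcf
  have hg0 : g 0 = 0 := by
    have := H 1 le_rfl (by omega)
    rw [one_mul, Nat.div_eq_of_lt (by omega), Nat.div_eq_of_lt (by omega)] at this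
    simpa using this
  have H' : ∀ k : ℕ, 1 ≤ k → k ≤ a - 1 →
      g 1 * ((k * l / a : ℕ) : ℝ) + g 2 * ((k * l' / a : ℕ) : ℝ) = 0 := by
    intro k hk1 hk2
    have := H k hk1 hk2
    rw [hg0] at this; linarith
  have h12 : g 1 = 0 ∧ g 2 = 0 := by
    rcases lt_or_gt_of_ne hne with hlt | hgt
    · exact key a l l' ha hl1 hlt hl'2 (g 1) (g 2) H'
    · have := key a l' l ha hl'1 hgt hl2 (g 2) (g 1) (fun k hk1 hk2 => by
        have := H' k hk1 hk2; linarith)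
      exact ⟨this.2, this.1⟩
  intro i
  fin_cases i
  · exact hg0
  · exact h12.1
  · exact h12.2
end
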